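/- There is no quadratic map V(f)ₖ = aₖf₁² + bₖf₂² + cₖf₃² + αₖf₁f₂ + βₖf₂f₃ + γₖf₁f₃ on ℝ³ mapping the unit sphere into itself such that the associated linear map Δ on M₂(ℂ) defined by Δ(w₀I + w·σ) = w₀(I⊗I) + Σ_{m,l}⟨b_{ml}, w⟩σₘ⊗σₗ (with b₍₁₁₎ = a, b₍₂₂₎ = b, b₍₃₃₎ = c, b₍₁₂₎ = b₍₂₁₎ = A/2, b₍₂₃₎ = b₍₃₂₎ = B/2, b₍₁₃₎ = b₍₃₁₎ = Γ/2) is positive. In other words, a q-pure symmetric quasi quantum quadratic operator with Haar state τ is never a positive map. -/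

import Mathlib

open Matrix Complex
open scoped ComplexOrder

noncomputable def sigma1 : Matrix (Fin 2) (Fin 2) ℂ := !![0, 1; 1, 0]
noncomputable def sigma2 : Matrix (Fin 2) (Fin 2) ℂ := !![0, -I; I, 0]
noncomputable def sigma3 : Matrix (Fin 2) (Fin 2) ℂ := !![1, 0; 0, -1]

noncomputable def pauli (w : Fin 3 → ℂ) : Matrix (Fin 2) (Fin 2) ℂ :=
  w 0 • sigma1 + w 1 • sigma2 + w 2 • sigma3

open Kronecker

noncomputable def sigma : Fin 3 → Matrix (Fin 2) (Fin 2) ℂ := ![sigma1, sigma2, sigma3]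

/-- The coefficient vectors `b_{ml}` built from `a, b, c, A, B, Γ`:
`b₁₁ = a, b₂₂ = b, b₃₃ = c, b₁₂ = b₂₁ = A/2, b₂₃ = b₃₂ = B/2, b₁₃ = b₃₁ = Γ/2`. -/
noncomputable def bmlOf (a b c A B Γ : Fin 3 → ℝ) : Fin 3 → Fin 3 → Fin 3 → ℝ :=
  ![![a, fun i => A i / 2, fun i => Γ i / 2],
    ![fun i => A i / 2, b, fun i => B i / 2],
    ![fun i => Γ i / 2, fun i => B i / 2, c]]

/-- The symmetric quasi q.q.o. with Haar state `τ`: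
`Δ(w₀ I + w·σ) = w₀ (I⊗I) + ∑_{m,l} ⟨b_{ml}, w⟩ σₘ ⊗ σₗ` (on self-adjoint elements,
i.e. real `w₀, w`). -/
noncomputable def DeltaOf (a b c A B Γ : Fin 3 → ℝ) (w₀ : ℝ) (w : Fin 3 → ℝ) :
    Matrix (Fin 2 × Fin 2) (Fin 2 × Fin 2) ℂ :=
  (w₀ : ℂ) • ((1 : Matrix (Fin 2) (Fin 2) ℂ) ⊗ₖ (1 : Matrix (Fin 2) (Fin 2) ℂ))
    + ∑ m, ∑ l, ((∑ j, bmlOf a b c A B Γ m l j * w j : ℝ) : ℂ) • (sigma m ⊗ₖ sigma l)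

/-!
Homogeneity turns q-purity into the identity `‖V f‖² = ‖f‖⁴` on all of `ℝ³`, and comparing
coefficients of this quartic identity on the coordinate planes and on the planes `f₁ = ±f₂` gives
`‖a‖ = ‖b‖ = ‖c‖ = 1`, `‖A‖² = 2 - 2⟨a, b⟩`, `A ⊥ a, b`, `B ⊥ b, c`, `Γ ⊥ a` and
`⟨c, A⟩ + ⟨B, Γ⟩ = 0`. Positivity of `Δ`, tested on Bell vectors, bounds `|⟨a + b, w⟩|` by
`w₀ - ⟨c, w⟩` and `|⟨a - b, w⟩|` by `w₀ + ⟨c, w⟩`; at `w₀ = 1` and `w = a, b, c` this forces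
`a, b, c` to be orthonormal. Expanding in this basis, `⟨B, Γ⟩ = 0`, hence `⟨c, A⟩ = 0`, hence
`A = 0`, contradicting `‖A‖² = 2`.
-/

section Homogeneity

variable {ι κ : Type*} [Fintype ι] [Fintype κ]

theorem dotProduct_self_eq_sq_of_unit {V : (ι → ℝ) → κ → ℝ}
    (hV : ∀ (t : ℝ) (f : ι → ℝ), V (t • f) = t ^ 2 • V f)
    (h : ∀ f, f ⬝ᵥ f = 1 → V f ⬝ᵥ V f = 1) (f : ι → ℝ) :
    V f ⬝ᵥ V f = (f ⬝ᵥ f) ^ 2 := by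
  obtain rfl | hf := eq_or_ne f 0
  · simpa using congrArg (fun v => v ⬝ᵥ v) (hV 0 0)
  have hpos : 0 < f ⬝ᵥ f := lt_of_le_of_ne (Finset.sum_nonneg fun i _ => mul_self_nonneg (f i))
    (Ne.symm (dotProduct_self_eq_zero.not.mpr hf))
  set r := √(f ⬝ᵥ f)
  have hr : r ^ 2 = f ⬝ᵥ f := Real.sq_sqrt hpos.le
  have hr0 : r ≠ 0 := (Real.sqrt_pos.mpr hpos).ne'
  have hunit := h (r⁻¹ • f) (by
    rw [smul_dotProduct, dotProduct_smul, smul_eq_mul, smul_eq_mul, ← mul_assoc, ← hr]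
    field_simp)
  rw [hV, smul_dotProduct, dotProduct_smul, smul_eq_mul, smul_eq_mul, ← mul_assoc] at hunit
  rw [← hr]
  field_simp at hunit
  linear_combination hunit

end Homogeneity

theorem coeffs_of_binary_quartic_eq {κ : Type*} [Fintype κ] {p q P : κ → ℝ} {α β : ℝ}
    {V : ℝ → ℝ → κ → ℝ} (hV : ∀ x y, V x y = x ^ 2 • p + y ^ 2 • q + (x * y) • P)
    (h : ∀ x y, V x y ⬝ᵥ V x y = (α * x ^ 2 + β * y ^ 2) ^ 2) :
    p ⬝ᵥ p = α ^ 2 ∧ q ⬝ᵥ q = β ^ 2 ∧ P ⬝ᵥ P + 2 * (p ⬝ᵥ q) = 2 * α * β ∧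
      p ⬝ᵥ P = 0 ∧ q ⬝ᵥ P = 0 := by
  have expand : ∀ x y : ℝ,
      (x ^ 2 • p + y ^ 2 • q + (x * y) • P) ⬝ᵥ (x ^ 2 • p + y ^ 2 • q + (x * y) • P)
        = x ^ 4 * (p ⬝ᵥ p) + y ^ 4 * (q ⬝ᵥ q) + x ^ 2 * y ^ 2 * (P ⬝ᵥ P + 2 * (p ⬝ᵥ q))
          + 2 * x ^ 3 * y * (p ⬝ᵥ P) + 2 * x * y ^ 3 * (q ⬝ᵥ P) := by
    intro x y
    simp only [add_dotProduct, dotProduct_add, smul_dotProduct, dotProduct_smul, smul_eq_mul,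
      dotProduct_comm q p, dotProduct_comm P p, dotProduct_comm P q]
    ring
  have h₁ := h 1 0
  have h₂ := h 0 1
  have h₃ := h 1 1
  have h₄ := h 1 (-1)
  have h₅ := h 2 1
  simp only [hV, expand] at h₁ h₂ h₃ h₄ h₅
  refine ⟨by linear_combination h₁, by linear_combination h₂, ?_, ?_, ?_⟩
  · linear_combination (h₃ + h₄) / 2 - h₁ - h₂
  · linear_combination (h₅ - 12 * h₁ + 3 * h₂ - 3 * h₃ - h₄) / 12
  · linear_combination (-h₅ + 12 * h₁ - 3 * h₂ + 6 * h₃ - 2 * h₄) / 12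

theorem sum_dotProduct_mul_dotProduct_of_orthonormal {n : Type*} [Fintype n] [DecidableEq n]
    {v : n → n → ℝ} (hv : ∀ i j, v i ⬝ᵥ v j = if i = j then 1 else 0) (x y : n → ℝ) :
    ∑ k, (v k ⬝ᵥ x) * (v k ⬝ᵥ y) = x ⬝ᵥ y := by
  set P : Matrix n n ℝ := of v
  have hP : P * Pᵀ = 1 := by
    ext i j
    rw [mul_apply', one_apply]
    exact hv i j
  have hPP : Pᵀ * P = 1 := mul_eq_one_comm.mp hP
  calc ∑ k, (v k ⬝ᵥ x) * (v k ⬝ᵥ y) = (P *ᵥ x) ⬝ᵥ (P *ᵥ y) := rfl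
    _ = x ⬝ᵥ y := by
      rw [dotProduct_mulVec, ← vecMul_transpose, vecMul_vecMul, hPP, vecMul_one]

section Positivity

variable {n : Type*} [Fintype n]

theorem Matrix.PosSemidef.of_conjTranspose_mul_self_eq_smul {N : Matrix n n ℂ} {r : ℝ}
    (hr : 0 < r) (h : Nᴴ * N = (r : ℂ) • N) : N.PosSemidef := by
  have hN : N = ((r⁻¹ : ℝ) : ℂ) • (Nᴴ * N) := by
    rw [h, smul_smul, ← Complex.ofReal_mul, inv_mul_cancel₀ hr.ne', Complex.ofReal_one, one_smul]
  rw [hN]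
  exact (posSemidef_conjTranspose_mul_self N).smul (by exact_mod_cast (inv_pos.mpr hr).le)

theorem Matrix.PosSemidef.abs_re_add_le [DecidableEq n] {M : Matrix n n ℂ} (hM : M.PosSemidef)
    (p q : n) : |(M p q + M q p).re| ≤ (M p p + M q q).re := by
  have key : ∀ ε : ℝ, ε ^ 2 = 1 → 0 ≤ (M p p + M q q).re + ε * (M p q + M q p).re := by
    intro ε hε
    have hq : ε * (ε * (M q q).re) = (M q q).re := by rw [← mul_assoc, ← sq, hε, one_mul]
    have h := (Complex.nonneg_iff.mp
      (hM.dotProduct_mulVec_nonneg (Pi.single p 1 + Pi.single q (ε : ℂ)))).1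
    simp [mulVec_add, dotProduct_add, add_dotProduct] at h
    simp only [Complex.add_re]
    linarith
  rw [abs_le]
  exact ⟨by linarith [key 1 (by norm_num)], by linarith [key (-1) (by norm_num)]⟩

end Positivity

section Pauli

variable (w : Fin 3 → ℝ)

theorem conjTranspose_pauli_ofReal : (pauli fun i => (w i : ℂ))ᴴ = pauli fun i => (w i : ℂ) := by
  ext i j
  fin_cases i <;> fin_cases j <;> simp [pauli, sigma1, sigma2, sigma3]

theorem pauli_ofReal_mul_self :
    (pauli fun i => (w i : ℂ)) * (pauli fun i => (w i : ℂ)) = ((w ⬝ᵥ w : ℝ) : ℂ) • 1 := by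
  ext i j
  fin_cases i <;> fin_cases j <;>
    simp [pauli, sigma1, sigma2, sigma3, mul_apply, dotProduct, Fin.sum_univ_two,
      Fin.sum_univ_three] <;> ring_nf <;> simp [Complex.I_sq]

theorem posSemidef_one_add_pauli (hw : w ⬝ᵥ w = 1) :
    (((1 : ℝ) : ℂ) • (1 : Matrix (Fin 2) (Fin 2) ℂ) + pauli fun i => (w i : ℂ)).PosSemidef := by
  refine .of_conjTranspose_mul_self_eq_smul (r := 2) two_pos ?_
  rw [conjTranspose_add, conjTranspose_pauli_ofReal]
  simp only [Complex.ofReal_one, one_smul, conjTranspose_one, add_mul, mul_add, one_mul, mul_one,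
    pauli_ofReal_mul_self, hw]
  module

end Pauli

section Delta

variable (a b c A B Γ : Fin 3 → ℝ) (w₀ : ℝ) (w : Fin 3 → ℝ)

theorem re_DeltaOf_diag_01_10 :
    (DeltaOf a b c A B Γ w₀ w (0, 1) (0, 1) + DeltaOf a b c A B Γ w₀ w (1, 0) (1, 0)).re
      = 2 * (w₀ - c ⬝ᵥ w) := by
  simp [DeltaOf, Fin.sum_univ_three, sigma, sigma1, sigma2, sigma3, bmlOf, dotProduct]
  ring

theorem re_DeltaOf_offdiag_01_10 :
    (DeltaOf a b c A B Γ w₀ w (0, 1) (1, 0) + DeltaOf a b c A B Γ w₀ w (1, 0) (0, 1)).re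
      = 2 * (a ⬝ᵥ w + b ⬝ᵥ w) := by
  simp [DeltaOf, Fin.sum_univ_three, sigma, sigma1, sigma2, sigma3, bmlOf, dotProduct]
  ring

theorem re_DeltaOf_diag_00_11 :
    (DeltaOf a b c A B Γ w₀ w (0, 0) (0, 0) + DeltaOf a b c A B Γ w₀ w (1, 1) (1, 1)).re
      = 2 * (w₀ + c ⬝ᵥ w) := by
  simp [DeltaOf, Fin.sum_univ_three, sigma, sigma1, sigma2, sigma3, bmlOf, dotProduct]
  ring

theorem re_DeltaOf_offdiag_00_11 :
    (DeltaOf a b c A B Γ w₀ w (0, 0) (1, 1) + DeltaOf a b c A B Γ w₀ w (1, 1) (0, 0)).re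
      = 2 * (a ⬝ᵥ w - b ⬝ᵥ w) := by
  simp [DeltaOf, Fin.sum_univ_three, sigma, sigma1, sigma2, sigma3, bmlOf, dotProduct]
  ring

variable {a b c A B Γ w₀ w}

theorem bell_bounds_of_posSemidef_DeltaOf (h : (DeltaOf a b c A B Γ w₀ w).PosSemidef) :
    |a ⬝ᵥ w + b ⬝ᵥ w| ≤ w₀ - c ⬝ᵥ w ∧ |a ⬝ᵥ w - b ⬝ᵥ w| ≤ w₀ + c ⬝ᵥ w := by
  have h₁ := h.abs_re_add_le (0, 1) (1, 0)
  have h₂ := h.abs_re_add_le (0, 0) (1, 1)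
  rw [re_DeltaOf_offdiag_01_10, re_DeltaOf_diag_01_10, abs_mul, abs_two] at h₁
  rw [re_DeltaOf_offdiag_00_11, re_DeltaOf_diag_00_11, abs_mul, abs_two] at h₂
  constructor <;> linarith

theorem orthogonal_of_posSemidef_DeltaOf
    (hpos : ∀ w : Fin 3 → ℝ, w ⬝ᵥ w = 1 → (DeltaOf a b c A B Γ 1 w).PosSemidef)
    (ha : a ⬝ᵥ a = 1) (hb : b ⬝ᵥ b = 1) (hc : c ⬝ᵥ c = 1) :
    a ⬝ᵥ b = 0 ∧ a ⬝ᵥ c = 0 ∧ b ⬝ᵥ c = 0 := by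
  obtain ⟨ha₁, ha₂⟩ := bell_bounds_of_posSemidef_DeltaOf (hpos a ha)
  obtain ⟨hb₁, hb₂⟩ := bell_bounds_of_posSemidef_DeltaOf (hpos b hb)
  obtain ⟨hc₁, -⟩ := bell_bounds_of_posSemidef_DeltaOf (hpos c hc)
  rw [abs_le] at ha₁ ha₂ hb₁ hb₂ hc₁
  rw [dotProduct_comm b a, dotProduct_comm c a, dotProduct_comm c b] at *
  refine ⟨?_, ?_, ?_⟩ <;> linarith

end Delta

section QuadMap

variable {κ : Type*}

def quadMap (a b c A B Γ : κ → ℝ) (f : Fin 3 → ℝ) : κ → ℝ := fun k =>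
  a k * f 0 ^ 2 + b k * f 1 ^ 2 + c k * f 2 ^ 2 + A k * f 0 * f 1 + B k * f 1 * f 2
    + Γ k * f 0 * f 2

theorem quadMap_smul (a b c A B Γ : κ → ℝ) (t : ℝ) (f : Fin 3 → ℝ) :
    quadMap a b c A B Γ (t • f) = t ^ 2 • quadMap a b c A B Γ f := by
  ext k
  simp only [quadMap, Pi.smul_apply, smul_eq_mul]
  ring

theorem quadMap_vecCons (a b c A B Γ : κ → ℝ) (x y z : ℝ) :
    quadMap a b c A B Γ ![x, y, z]
      = x ^ 2 • a + y ^ 2 • b + z ^ 2 • c + (x * y) • A + (y * z) • B + (x * z) • Γ := by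
  ext k
  simp only [quadMap, cons_val_zero, cons_val_one, cons_val, Pi.add_apply, Pi.smul_apply,
    smul_eq_mul]
  ring

theorem dotProduct_self_vecCons (x y z : ℝ) :
    ![x, y, z] ⬝ᵥ ![x, y, z] = x ^ 2 + y ^ 2 + z ^ 2 := by
  simp [dotProduct, Fin.sum_univ_three, sq]

variable [Fintype κ]

/-- `q`-purity of `V = quadMap a b c A B Γ` (it maps the unit sphere into itself), in its
homogeneous form `‖V f‖ = ‖f‖²`. -/
def IsQPure (a b c A B Γ : κ → ℝ) : Prop :=
  ∀ f, quadMap a b c A B Γ f ⬝ᵥ quadMap a b c A B Γ f = (f ⬝ᵥ f) ^ 2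

variable {a b c A B Γ : κ → ℝ}

theorem isQPure_of_sphere
    (h : ∀ f : Fin 3 → ℝ, f 0 ^ 2 + f 1 ^ 2 + f 2 ^ 2 = 1 →
      ∑ k, (a k * f 0 ^ 2 + b k * f 1 ^ 2 + c k * f 2 ^ 2
        + A k * f 0 * f 1 + B k * f 1 * f 2 + Γ k * f 0 * f 2) ^ 2 = 1) :
    IsQPure a b c A B Γ := by
  refine dotProduct_self_eq_sq_of_unit (quadMap_smul a b c A B Γ) fun f hf => ?_
  rw [dotProduct, Fin.sum_univ_three] at hf
  simpa only [dotProduct, quadMap, sq] using h f (by simpa only [sq] using hf)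

theorem IsQPure.rotate (h : IsQPure a b c A B Γ) : IsQPure b c a B Γ A := by
  intro f
  have hrot : quadMap b c a B Γ A f = quadMap a b c A B Γ ![f 2, f 0, f 1] := by
    ext k
    simp only [quadMap, cons_val_zero, cons_val_one, cons_val]
    ring
  rw [hrot, h, dotProduct_self_vecCons, dotProduct, Fin.sum_univ_three]
  ring

theorem IsQPure.relations_of_xyPlane (h : IsQPure a b c A B Γ) :
    a ⬝ᵥ a = 1 ∧ b ⬝ᵥ b = 1 ∧ A ⬝ᵥ A + 2 * (a ⬝ᵥ b) = 2 ∧ a ⬝ᵥ A = 0 ∧ b ⬝ᵥ A = 0 := by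
  obtain ⟨ha, hb, hA, haA, hbA⟩ := coeffs_of_binary_quartic_eq (p := a) (q := b) (P := A)
    (α := 1) (β := 1) (V := fun x y => quadMap a b c A B Γ ![x, y, 0])
    (fun x y => by rw [quadMap_vecCons]; module)
    (fun x y => by rw [h, dotProduct_self_vecCons]; ring)
  exact ⟨by simpa using ha, by simpa using hb, by simpa using hA, haA, hbA⟩

theorem IsQPure.dotProduct_add_dotProduct_eq_zero (h : IsQPure a b c A B Γ) :
    c ⬝ᵥ A + B ⬝ᵥ Γ = 0 := by
  obtain ⟨-, -, hplus, -, -⟩ := coeffs_of_binary_quartic_eq (p := a + b + A) (q := c)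
    (P := B + Γ) (α := 2) (β := 1) (V := fun x y => quadMap a b c A B Γ ![x, x, y])
    (fun x y => by rw [quadMap_vecCons]; module)
    (fun x y => by rw [h, dotProduct_self_vecCons]; ring)
  obtain ⟨-, -, hminus, -, -⟩ := coeffs_of_binary_quartic_eq (p := a + b - A) (q := c)
    (P := Γ - B) (α := 2) (β := 1) (V := fun x y => quadMap a b c A B Γ ![x, -x, y])
    (fun x y => by rw [quadMap_vecCons]; module)
    (fun x y => by rw [h, dotProduct_self_vecCons]; ring)
  simp only [add_dotProduct, sub_dotProduct, dotProduct_add, dotProduct_sub,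
    dotProduct_comm Γ B, dotProduct_comm A c] at hplus hminus
  linarith

end QuadMap

theorem stmt_18 :
    ¬ ∃ a b c A B Γ : Fin 3 → ℝ,
      -- the associated quadratic operator `V` maps the unit sphere into itself (q-purity)
      (∀ f : Fin 3 → ℝ, f 0 ^ 2 + f 1 ^ 2 + f 2 ^ 2 = 1 →
        ∑ k, (a k * f 0 ^ 2 + b k * f 1 ^ 2 + c k * f 2 ^ 2
            + A k * f 0 * f 1 + B k * f 1 * f 2 + Γ k * f 0 * f 2) ^ 2 = 1) ∧
      -- and `Δ` is a positive map
      (∀ (w₀ : ℝ) (w : Fin 3 → ℝ),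
        ((w₀ : ℂ) • (1 : Matrix (Fin 2) (Fin 2) ℂ) + pauli (fun i => (w i : ℂ))).PosSemidef →
          (DeltaOf a b c A B Γ w₀ w).PosSemidef) := by
  rintro ⟨a, b, c, A, B, Γ, hsphere, hpos⟩
  have hV := isQPure_of_sphere hsphere
  obtain ⟨ha, hb, hA, haA, hbA⟩ := hV.relations_of_xyPlane
  obtain ⟨-, hc, -, hbB, hcB⟩ := hV.rotate.relations_of_xyPlane
  obtain ⟨-, -, -, -, haΓ⟩ := hV.rotate.rotate.relations_of_xyPlane
  obtain ⟨hab, hac, hbc⟩ := orthogonal_of_posSemidef_DeltaOf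
    (fun w hw => hpos 1 w (posSemidef_one_add_pauli w hw)) ha hb hc
  have horth : ∀ i j, ![a, b, c] i ⬝ᵥ ![a, b, c] j = if i = j then 1 else 0 := by
    intro i j
    fin_cases i <;> fin_cases j <;> simp [ha, hb, hc, hab, hac, hbc, dotProduct_comm]
  have expand := fun x y => (sum_dotProduct_mul_dotProduct_of_orthonormal horth x y).symm
  simp only [Fin.sum_univ_three, cons_val] at expand
  have hBΓ : B ⬝ᵥ Γ = 0 := by rw [expand, haΓ, hbB, hcB]; ring
  have hcA : c ⬝ᵥ A = 0 := by linarith [hV.dotProduct_add_dotProduct_eq_zero]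
  have hA0 : A ⬝ᵥ A = 0 := by rw [expand, haA, hbA, hcA]; ring
  linarith
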